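/- arXiv:1609.01003 — 2 statements merged into one kernel-verified Lean document; each statement's English description precedes it below -/
import Mathlib

section
/- Let G = (V,E) be a finite graph and consider the unbiased random orientation (each edge oriented uniformly at random, independently). Fix s ∈ V. Then the random set R_s = {v ∈ V : s → v} of vertices reachable from s has the same distribution as the connected component of s in Bernoulli bond percolation on G with parameter 1/2 (each edge retained independently with probability 1/2). -/
open Classical Finset

noncomputable section

variable {V : Type*} [Fintype V] [LinearOrder V]

/-- An orientation of the edges of `G`: `true` on edge `e = {u,v}` (with `u < v`)
means the edge is oriented from `u` to `v` (min to max). -/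
def Orient (G : SimpleGraph V) : Type _ := ↥G.edgeFinset → Bool

instance (G : SimpleGraph V) : Fintype (Orient G) := by unfold Orient; infer_instance

/-- The edge `{u,v}` exists and is oriented from `u` to `v` in `ω`. -/
def step (G : SimpleGraph V) (ω : Orient G) (u v : V) : Prop :=
  ∃ h : G.Adj u v,
    ω ⟨s(u, v), SimpleGraph.mem_edgeFinset.mpr ((SimpleGraph.mem_edgeSet G).mpr h)⟩ = decide (u < v)

/-- There is a directed path from `x` to `y` in the orientation `ω`. -/
def reaches (G : SimpleGraph V) (ω : Orient G) (x y : V) : Prop :=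
  Relation.ReflTransGen (step G ω) x y

/-- The probability of the orientation `ω` under independent `p`-biased coin flips. -/
def wt (G : SimpleGraph V) (p : Sym2 V → ℝ) (ω : Orient G) : ℝ :=
  ∏ e : G.edgeFinset, if ω e then p e else 1 - p e

/-- Probability of an event under the `p`-biased random orientation measure. -/
def Pr (G : SimpleGraph V) (p : Sym2 V → ℝ) (A : Set (Orient G)) : ℝ :=
  ∑ ω : Orient G, A.indicator (wt G p) ω

/-- The edge `{u,v}` exists and is retained in the percolation configuration `ωp`. -/
def percStep (G : SimpleGraph V) (ωp : Orient G) (u v : V) : Prop :=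
  ∃ h : G.Adj u v, ωp ⟨s(u, v), SimpleGraph.mem_edgeFinset.mpr ((SimpleGraph.mem_edgeSet G).mpr h)⟩ = true

/-- `x` and `y` are joined by a path of retained edges. -/
def percReaches (G : SimpleGraph V) (ωp : Orient G) (x y : V) : Prop :=
  Relation.ReflTransGen (percStep G ωp) x y

/-!
Put both models in one family: fix `key : V → V → Bool` and let the edge `xy` be crossed from `x`
to `y` when its bit equals `key x y`; orientations are `key x y = decide (x < y)`, percolation is
`key = true`. Explore the cluster of a set `S` through a set `F` of unexplored edges. Take an edge
`uv ∈ F` with `u ∈ S` and reveal its bit: with probability `1/2` it equals `key u v` and `v` joins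
`S`; otherwise the edge is useless, as it can only lead back into `S`. Either way the rest of the
exploration never reads that bit again, so by induction on `F` the law of the explored set does
not depend on `key`.
-/

section ReachSet

variable {α : Type*}

def reachSet (r : α → α → Prop) (S : Set α) : Set α :=
  {v | ∃ x ∈ S, Relation.ReflTransGen r x v}

variable {r r' : α → α → Prop} {S T : Set α}

theorem subset_reachSet : S ⊆ reachSet r S :=
  fun x hx => ⟨x, hx, .refl⟩

theorem reachSet_closed {x y : α} (hx : x ∈ reachSet r S) (hxy : r x y) : y ∈ reachSet r S :=
  let ⟨z, hz, hzx⟩ := hx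
  ⟨z, hz, hzx.tail hxy⟩

theorem reachSet_subset (hST : S ⊆ T) (hT : ∀ x y, x ∈ T → r x y → y ∈ T) :
    reachSet r S ⊆ T := by
  rintro v ⟨x, hx, hxv⟩
  induction hxv with
  | refl => exact hST hx
  | tail _ hyz ih => exact hT _ _ ih hyz

theorem reachSet_mono (hr : ∀ x y, r x y → r' x y) (hS : S ⊆ T) :
    reachSet r S ⊆ reachSet r' T :=
  reachSet_subset (hS.trans subset_reachSet) fun _ _ hx hxy => reachSet_closed hx (hr _ _ hxy)

theorem reachSet_singleton (s : α) : reachSet r {s} = {v | Relation.ReflTransGen r s v} := by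
  ext v
  simp [reachSet]

end ReachSet

section FlipCoordinate

variable {ι : Type*} [Fintype ι] [DecidableEq ι]

theorem card_filter_and_apply_eq_card_filter_and_apply_ne (Q : (ι → Bool) → Prop)
    [DecidablePred Q] (i : ι) (hQ : ∀ ω b, Q (Function.update ω i b) ↔ Q ω) (b : Bool) :
    #{ω | Q ω ∧ ω i = b} = #{ω | Q ω ∧ ω i ≠ b} := by
  let flip : (ι → Bool) → ι → Bool := fun ω => Function.update ω i (!ω i)
  have flip_apply : ∀ ω, flip ω i = !ω i := fun ω => Function.update_self ..
  have flip_flip : ∀ ω, flip (flip ω) = ω := fun ω => by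
    simp only [flip, Function.update_self, Bool.not_not, Function.update_idem,
      Function.update_eq_self]
  refine card_nbij' flip flip (fun ω hω => ?_) (fun ω hω => ?_) (fun ω _ => flip_flip ω)
    (fun ω _ => flip_flip ω)
  all_goals
    simp only [coe_filter, mem_univ, true_and, Set.mem_ofPred_eq, flip_apply] at hω ⊢
    refine ⟨(hQ _ _).2 hω.1, ?_⟩
    cases h : ω i <;> simp_all

theorem two_mul_card_filter_and_apply_eq (Q : (ι → Bool) → Prop) [DecidablePred Q] (i : ι)
    (hQ : ∀ ω b, Q (Function.update ω i b) ↔ Q ω) (b : Bool) :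
    2 * #{ω | Q ω ∧ ω i = b} = #{ω | Q ω} := by
  rw [two_mul]
  nth_rw 2 [card_filter_and_apply_eq_card_filter_and_apply_ne Q i hQ b]
  rw [← filter_filter, ← filter_filter, card_filter_add_card_filter_not]

theorem two_mul_card_filter_and_apply_ne (Q : (ι → Bool) → Prop) [DecidablePred Q] (i : ι)
    (hQ : ∀ ω b, Q (Function.update ω i b) ↔ Q ω) (b : Bool) :
    2 * #{ω | Q ω ∧ ω i ≠ b} = #{ω | Q ω} := by
  rw [← card_filter_and_apply_eq_card_filter_and_apply_ne Q i hQ b]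
  exact two_mul_card_filter_and_apply_eq Q i hQ b

end FlipCoordinate

section Exploration

variable (G : SimpleGraph V)

def edgeOf {x y : V} (h : G.Adj x y) : G.edgeFinset :=
  ⟨s(x, y), SimpleGraph.mem_edgeFinset.mpr ((SimpleGraph.mem_edgeSet G).mpr h)⟩

omit [LinearOrder V] in
theorem edgeOf_eq_edgeOf_iff {x y x' y' : V} (h : G.Adj x y) (h' : G.Adj x' y') :
    edgeOf G h = edgeOf G h' ↔ (x = x' ∧ y = y') ∨ (x = y' ∧ y = x') :=
  Subtype.ext_iff.trans Sym2.eq_iff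

def openStep (key : V → V → Bool) (F : Finset G.edgeFinset) (ω : G.edgeFinset → Bool)
    (x y : V) : Prop :=
  ∃ h : G.Adj x y, edgeOf G h ∈ F ∧ ω (edgeOf G h) = key x y

def cluster (key : V → V → Bool) (F : Finset G.edgeFinset) (S : Set V)
    (ω : G.edgeFinset → Bool) : Set V :=
  reachSet (openStep G key F ω) S

variable {G} (key : V → V → Bool) (F : Finset G.edgeFinset) (S : Set V)
  (ω : G.edgeFinset → Bool)

omit [LinearOrder V] in
theorem openStep_mono {F'} (hF : F ⊆ F') {x y : V} (hxy : openStep G key F ω x y) :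
    openStep G key F' ω x y :=
  let ⟨h, hm, hb⟩ := hxy
  ⟨h, hF hm, hb⟩

theorem cluster_update {e : G.edgeFinset} (he : e ∉ F) (b : Bool) :
    cluster G key F S (Function.update ω e b) = cluster G key F S ω := by
  have : openStep G key F (Function.update ω e b) = openStep G key F ω := by
    ext x y
    refine exists_congr fun h => and_congr_right fun hm => ?_
    rw [Function.update_of_ne (ne_of_mem_of_not_mem hm he)]
  rw [cluster, this, cluster]

theorem cluster_eq_of_apply_eq {u v : V} (h : G.Adj u v) (hF : edgeOf G h ∈ F) (hu : u ∈ S)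
    (hb : ω (edgeOf G h) = key u v) :
    cluster G key F S ω = cluster G key (F.erase (edgeOf G h)) (insert v S) ω := by
  refine (reachSet_subset ?_ ?_).antisymm (reachSet_subset ?_ ?_)
  · exact (Set.subset_insert _ _).trans subset_reachSet
  · rintro x y hx ⟨hxy, hm, hbit⟩
    by_cases he : edgeOf G hxy = edgeOf G h
    · obtain ⟨rfl, rfl⟩ | ⟨rfl, rfl⟩ := (edgeOf_eq_edgeOf_iff G hxy h).1 he
      · exact subset_reachSet (Set.mem_insert _ _)
      · exact subset_reachSet (Set.mem_insert_of_mem _ hu)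
    · exact reachSet_closed hx ⟨hxy, mem_erase.2 ⟨he, hm⟩, hbit⟩
  · rintro x (rfl | hx)
    · exact reachSet_closed (subset_reachSet hu) ⟨h, hF, hb⟩
    · exact subset_reachSet hx
  · exact fun x y hx hxy => reachSet_closed hx (openStep_mono key _ ω (erase_subset _ _) hxy)

theorem cluster_eq_of_apply_ne {u v : V} (h : G.Adj u v) (hu : u ∈ S)
    (hb : ω (edgeOf G h) ≠ key u v) :
    cluster G key F S ω = cluster G key (F.erase (edgeOf G h)) S ω := by
  refine (reachSet_subset subset_reachSet ?_).antisymm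
    (reachSet_mono (fun x y => openStep_mono key _ ω (erase_subset _ _)) subset_rfl)
  rintro x y hx ⟨hxy, hm, hbit⟩
  by_cases he : edgeOf G hxy = edgeOf G h
  · obtain ⟨rfl, rfl⟩ | ⟨rfl, rfl⟩ := (edgeOf_eq_edgeOf_iff G hxy h).1 he
    · exact absurd hbit hb
    · exact subset_reachSet hu
  · exact reachSet_closed hx ⟨hxy, mem_erase.2 ⟨he, hm⟩, hbit⟩

theorem two_mul_card_cluster {u v : V} (h : G.Adj u v) (hF : edgeOf G h ∈ F) (hu : u ∈ S)
    (A : Set V) :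
    2 * #{ω | cluster G key F S ω = A} =
      #{ω | cluster G key (F.erase (edgeOf G h)) (insert v S) ω = A} +
        #{ω | cluster G key (F.erase (edgeOf G h)) S ω = A} := by
  set e := edgeOf G h
  have hQ : ∀ (T : Set V) (ω : G.edgeFinset → Bool) b,
      cluster G key (F.erase e) T (Function.update ω e b) = A ↔
        cluster G key (F.erase e) T ω = A := fun T ω b => by
    rw [cluster_update key _ T ω (notMem_erase e F)]
  have hopen : #{ω | cluster G key F S ω = A ∧ ω e = key u v} =
      #{ω | cluster G key (F.erase e) (insert v S) ω = A ∧ ω e = key u v} := by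
    refine congrArg card (filter_congr fun ω _ => and_congr_left fun hb => ?_)
    rw [cluster_eq_of_apply_eq key F S ω h hF hu hb]
  have hshut : #{ω | cluster G key F S ω = A ∧ ω e ≠ key u v} =
      #{ω | cluster G key (F.erase e) S ω = A ∧ ω e ≠ key u v} := by
    refine congrArg card (filter_congr fun ω _ => and_congr_left fun hb => ?_)
    rw [cluster_eq_of_apply_ne key F S ω h hu hb]
  rw [← card_filter_add_card_filter_not (fun ω : G.edgeFinset → Bool => ω e = key u v),
    filter_filter, filter_filter, mul_add, hopen, hshut,
    two_mul_card_filter_and_apply_eq (cluster G key (F.erase e) (insert v S) · = A) e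
      (hQ (insert v S)),
    two_mul_card_filter_and_apply_ne (cluster G key (F.erase e) S · = A) e (hQ S)]

theorem card_cluster_eq_card_cluster (key' : V → V → Bool) (A : Set V) :
    #{ω | cluster G key F S ω = A} = #{ω | cluster G key' F S ω = A} := by
  induction F using Finset.strongInduction generalizing S with
  | H F ih =>
  by_cases hexit : ∃ u v, ∃ h : G.Adj u v, edgeOf G h ∈ F ∧ u ∈ S
  · obtain ⟨u, v, h, hF, hu⟩ := hexit
    have hlt := erase_ssubset hF
    refine Nat.eq_of_mul_eq_mul_left two_pos ?_
    rw [two_mul_card_cluster key F S h hF hu, two_mul_card_cluster key' F S h hF hu,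
      ih _ hlt, ih _ hlt]
  · have hS : ∀ key ω, cluster G key F S ω = S := fun key ω =>
      (reachSet_subset subset_rfl fun x y hx ⟨h, hm, _⟩ =>
        absurd ⟨x, y, h, hm, hx⟩ hexit).antisymm subset_reachSet
    simp only [hS]

omit [LinearOrder V] in
theorem openStep_univ_iff {x y : V} :
    openStep G key univ ω x y ↔ ∃ h : G.Adj x y, ω (edgeOf G h) = key x y := by
  simp [openStep]

omit [LinearOrder V] in
theorem setOf_percReaches_eq_cluster (ω : Orient G) (s : V) :
    {v | percReaches G ω s v} = cluster G (fun _ _ => true) univ {s} ω := by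
  have : percStep G ω = openStep G (fun _ _ => true) univ ω := by
    ext x y
    exact (openStep_univ_iff (fun _ _ => true) ω).symm
  simp only [cluster, reachSet_singleton, ← this]
  rfl

omit [LinearOrder V] in
theorem wt_half (ω : Orient G) :
    wt G (fun _ => 1 / 2) ω = (1 / 2) ^ Fintype.card G.edgeFinset := by
  rw [wt, ← card_univ, ← prod_const]
  exact prod_congr rfl fun e _ => by split <;> norm_num

theorem Pr_half (E : Set (Orient G)) :
    Pr G (fun _ => 1 / 2) E = #{ω | ω ∈ E} * (1 / 2) ^ Fintype.card G.edgeFinset := by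
  simp only [Pr, Set.indicator_apply, wt_half]
  rw [← sum_filter, sum_const, nsmul_eq_mul]

end Exploration

theorem setOf_reaches_eq_cluster (G : SimpleGraph V) (ω : Orient G) (s : V) :
    {v | reaches G ω s v} = cluster G (fun x y => decide (x < y)) univ {s} ω := by
  have : step G ω = openStep G (fun x y => decide (x < y)) univ ω := by
    ext x y
    exact (openStep_univ_iff (fun x y => decide (x < y)) ω).symm
  simp only [cluster, reachSet_singleton, ← this]
  rfl

/-- McDiarmid's observation: in an unbiased random orientation, the set of
vertices reachable from `s` is distributed as the percolation cluster of `s`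
at density 1/2. -/
theorem out_component_eq_percolation_cluster (G : SimpleGraph V) (s : V) :
    ∀ A : Set V,
      Pr G (fun _ => 1 / 2) {ω | {v | reaches G ω s v} = A} =
        Pr G (fun _ => 1 / 2) {ωp | {v | percReaches G ωp s v} = A} := by
  intro A
  simp only [Pr_half, Set.mem_ofPred_eq, setOf_reaches_eq_cluster, setOf_percReaches_eq_cluster]
  congr 2
  exact card_cluster_eq_card_cluster _ _ _ _ A
end
end

section
/- Let G = (V,E) be a finite graph, s, a, b ∈ V, with the p-biased random orientation. Assume the set-version correlation inequality P(S → a and S → b) ≥ P(S → a)·P(S → b) holds for all nonempty S ⊆ V' and all vertices a, b of every graph on fewer vertices than G. Then using the decomposition over the random out-boundary O_S of S and the four-functions theorem, P(S → a and S → b) ≥ P(S → a)·P(S → b) holds in G for every nonempty S ⊆ V. -/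
open Classical Finset

noncomputable section

variable {V : Type*} [Fintype V] [LinearOrder V]

/-!
Condition on the out-boundary `O_S` of `S`: the vertices outside `S` entered by an edge oriented
away from `S`. For `a ∉ S`, `S` reaches `a` exactly when `O_S` reaches `a` inside `G - S`, and
`O_S` is determined by the edges meeting `S`, hence independent of the orientation of `G - S`.
So each of the three probabilities is an average over `X` of the corresponding probability for
the source set `X` in `G - S`, with weights `P(O_S = X)`. The induction hypothesis gives the
correlation for every fixed `X`, both marginals are increasing in `X`, and the law of `O_S` is
log-modular, because whether `v ∈ O_S` is decided by the edges between `S` and `v`, and these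
sets of edges are disjoint for distinct `v`. The FKG inequality then gives the claim.
-/

lemma mem_apply_piecewise_iff {ι W : Type*} (R : ι → W → Prop)
    (hR : ∀ i v w, R i v → R i w → v = w) {g : (ι → Bool) → Finset W}
    (hg : ∀ v σ τ, (∀ i, R i v → σ i = τ i) → (v ∈ g σ ↔ v ∈ g τ)) (D : Finset W)
    (σ τ : ι → Bool) (v : W) :
    v ∈ g ({i | ∃ w ∈ D, R i w}.piecewise σ τ) ↔ if v ∈ D then v ∈ g σ else v ∈ g τ := by
  split_ifs with hv
  · exact hg v _ _ fun i hi => Set.piecewise_eq_of_mem _ _ _ ⟨v, hv, hi⟩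
  · exact hg v _ _ fun i hi => Set.piecewise_eq_of_notMem _ _ _
      fun ⟨w, hw, hiw⟩ => hv (hR i v w hi hiw ▸ hw)

section BernoulliProduct

variable {ι κ : Type*} [Fintype ι] [Fintype κ] (q : ι → ℝ)

def bernoulliWeight (σ : ι → Bool) : ℝ := ∏ i, if σ i then q i else 1 - q i

lemma bernoulliWeight_piecewise_mul_piecewise (J : Set ι) [DecidablePred (· ∈ J)]
    (σ τ : ι → Bool) :
    bernoulliWeight q (J.piecewise σ τ) * bernoulliWeight q (J.piecewise τ σ) =
      bernoulliWeight q σ * bernoulliWeight q τ := by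
  simp only [bernoulliWeight, ← prod_mul_distrib]
  refine prod_congr rfl fun i _ => ?_
  by_cases hi : i ∈ J <;> simp [hi, mul_comm]

lemma bernoulliWeight_subtype_mul_subtype (P : ι → Prop) [DecidablePred P] (σ : ι → Bool) :
    bernoulliWeight (fun i : {i // P i} => q i) (fun i => σ i) *
        bernoulliWeight (fun i : {i // ¬P i} => q i) (fun i => σ i) =
      bernoulliWeight q σ :=
  Fintype.prod_subtype_mul_prod_subtype P fun i => if σ i then q i else 1 - q i

lemma bernoulliWeight_comp_equiv (e : κ ≃ ι) (σ : ι → Bool) :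
    bernoulliWeight (fun k => q (e k)) (fun k => σ (e k)) = bernoulliWeight q σ :=
  e.prod_comp fun i => if σ i then q i else 1 - q i

variable {q}

lemma bernoulliWeight_nonneg (hq : ∀ i, 0 ≤ q i ∧ q i ≤ 1) (σ : ι → Bool) :
    0 ≤ bernoulliWeight q σ :=
  prod_nonneg fun i _ => by cases σ i <;> simp [(hq i).1, (hq i).2]

-- Explicit `DecidableEq` instances, rather than the classical ones, keep `bernoulliProb` on
-- `G.edgeFinset` definitionally equal to `Pr G`.
variable [DecidableEq ι] [DecidableEq κ] (q)

lemma sum_bernoulliWeight : ∑ σ, bernoulliWeight q σ = 1 := by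
  simp only [bernoulliWeight]
  rw [← Fintype.prod_sum (fun i (b : Bool) => if b then q i else 1 - q i)]
  simp

def bernoulliProb (A : Set (ι → Bool)) : ℝ := ∑ σ, A.indicator (bernoulliWeight q) σ

lemma bernoulliProb_univ : bernoulliProb q Set.univ = 1 := by
  simp [bernoulliProb, sum_bernoulliWeight]

lemma bernoulliProb_empty : bernoulliProb q ∅ = 0 := by
  simp [bernoulliProb]

lemma bernoulliProb_comp_equiv (e : κ ≃ ι) (B : Set (κ → Bool)) :
    bernoulliProb q {σ | (fun k => σ (e k)) ∈ B} = bernoulliProb (fun k => q (e k)) B := by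
  refine Fintype.sum_equiv (e.symm.arrowCongr (Equiv.refl Bool)) _ _ fun σ => ?_
  rw [Set.indicator_apply, ← bernoulliWeight_comp_equiv q e σ]
  rfl

lemma bernoulliProb_subtype_and_subtype (P : ι → Prop) [DecidablePred P]
    (B : Set ({i // P i} → Bool)) (A : Set ({i // ¬P i} → Bool)) :
    bernoulliProb q {σ | (fun i : {i // P i} => σ i) ∈ B ∧ (fun i : {i // ¬P i} => σ i) ∈ A} =
      bernoulliProb (fun i : {i // P i} => q i) B *
        bernoulliProb (fun i : {i // ¬P i} => q i) A := by
  rw [bernoulliProb, bernoulliProb, bernoulliProb, sum_mul_sum, ← Fintype.sum_prod_type']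
  refine Fintype.sum_equiv (Equiv.piEquivPiSubtypeProd P _) _ _ fun σ => ?_
  simp only [Set.indicator_apply, Set.mem_ofPred_eq, Equiv.piEquivPiSubtypeProd_apply,
    ← bernoulliWeight_subtype_mul_subtype q P σ]
  split_ifs <;> simp_all

variable {q}

lemma bernoulliProb_nonneg (hq : ∀ i, 0 ≤ q i ∧ q i ≤ 1) (A : Set (ι → Bool)) :
    0 ≤ bernoulliProb q A :=
  sum_nonneg fun σ _ => A.indicator_nonneg (fun σ _ => bernoulliWeight_nonneg hq σ) σ

lemma bernoulliProb_mono (hq : ∀ i, 0 ≤ q i ∧ q i ≤ 1) {A B : Set (ι → Bool)} (h : A ⊆ B) :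
    bernoulliProb q A ≤ bernoulliProb q B :=
  sum_le_sum fun σ _ => Set.indicator_le_indicator_of_subset h (bernoulliWeight_nonneg hq) σ

lemma bernoulliProb_and_comp_of_equiv (P : ι → Prop) [DecidablePred P] (e : κ ≃ {i // P i})
    {A : Set (ι → Bool)} (hA : ∀ σ τ, (∀ i, ¬P i → σ i = τ i) → σ ∈ A → τ ∈ A)
    (B : Set (κ → Bool)) :
    bernoulliProb q {σ | σ ∈ A ∧ (fun k => σ (e k)) ∈ B} =
      bernoulliProb q A * bernoulliProb (fun k => q (e k)) B := by
  let A' : Set ({i // ¬P i} → Bool) :=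
    {τ | (Equiv.piEquivPiSubtypeProd P _).symm (fun _ => false, τ) ∈ A}
  have hsplit : ∀ B' : Set (κ → Bool), bernoulliProb q {σ | σ ∈ A ∧ (fun k => σ (e k)) ∈ B'} =
      bernoulliProb (fun k => q (e k)) B' * bernoulliProb (fun i : {i // ¬P i} => q i) A' := by
    intro B'
    rw [← bernoulliProb_comp_equiv (fun i : {i // P i} => q i) e,
      ← bernoulliProb_subtype_and_subtype]
    congr 1
    ext σ
    refine and_comm.trans (and_congr Iff.rfl ⟨hA _ _ fun i hi => ?_, hA _ _ fun i hi => ?_⟩) <;>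
      simp [hi]
  have hA_eq : bernoulliProb q A = bernoulliProb (fun i : {i // ¬P i} => q i) A' := by
    simpa [bernoulliProb_univ] using hsplit Set.univ
  rw [hsplit, hA_eq, mul_comm]

lemma sum_bernoulliProb_fiber {β : Type*} [Fintype β] [DecidableEq β] (g : (ι → Bool) → β)
    (A : β → Set (ι → Bool)) :
    ∑ x, bernoulliProb q {σ | g σ = x ∧ σ ∈ A x} = bernoulliProb q {σ | σ ∈ A (g σ)} := by
  simp only [bernoulliProb, Set.indicator_apply, Set.mem_ofPred_eq]
  rw [sum_comm]
  refine sum_congr rfl fun σ _ => ?_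
  rw [sum_eq_single (g σ) (fun x _ hx => if_neg fun h => hx h.1.symm) (by simp)]
  simp

lemma bernoulliProb_setOf_eq_sum_mul {β : Type*} [Fintype β] [DecidableEq β] (P : ι → Prop)
    [DecidablePred P] (e : κ ≃ {i // P i}) (g : (ι → Bool) → β)
    (hg : ∀ σ τ, (∀ i, ¬P i → σ i = τ i) → g σ = g τ) (E : β → Set (κ → Bool)) :
    bernoulliProb q {σ | (fun k => σ (e k)) ∈ E (g σ)} =
      ∑ x, bernoulliProb q {σ | g σ = x} * bernoulliProb (fun k => q (e k)) (E x) := by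
  calc _ = ∑ x, bernoulliProb q {σ | g σ = x ∧ (fun k => σ (e k)) ∈ E x} :=
        (sum_bernoulliProb_fiber g fun x => {σ | (fun k => σ (e k)) ∈ E x}).symm
    _ = _ := sum_congr rfl fun x _ => bernoulliProb_and_comp_of_equiv P e
        (fun σ τ h hσ => (hg τ σ fun i hi => (h i hi).symm).trans hσ) (E x)

/- Exchanging `σ` and `τ` on the coordinates that decide membership of the vertices of `Y \ X`
maps the pairs of fibres over `(X, Y)` bijectively onto those over `(X ∩ Y, X ∪ Y)`, and
preserves the product weight. -/
lemma bernoulliProb_fiber_mul_fiber {W : Type*} [DecidableEq W] (R : ι → W → Prop)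
    (hR : ∀ i v w, R i v → R i w → v = w) (g : (ι → Bool) → Finset W)
    (hg : ∀ v σ τ, (∀ i, R i v → σ i = τ i) → (v ∈ g σ ↔ v ∈ g τ)) (X Y : Finset W) :
    bernoulliProb q {σ | g σ = X} * bernoulliProb q {σ | g σ = Y} =
      bernoulliProb q {σ | g σ = X ∩ Y} * bernoulliProb q {σ | g σ = X ∪ Y} := by
  let J : Set ι := {i | ∃ w ∈ Y \ X, R i w}
  have hmem := mem_apply_piecewise_iff R hR hg (Y \ X)
  have hinv : ∀ σ τ : ι → Bool, J.piecewise (J.piecewise σ τ) (J.piecewise τ σ) = σ := by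
    intro σ τ
    ext i
    by_cases hi : i ∈ J <;> simp [hi]
  let swap (st : (ι → Bool) × (ι → Bool)) := (J.piecewise st.1 st.2, J.piecewise st.2 st.1)
  have hswap : Function.Involutive swap := fun st => Prod.ext (hinv st.1 st.2) (hinv st.2 st.1)
  have hfib : ∀ σ τ, g σ = X ∧ g τ = Y ↔
      g (J.piecewise σ τ) = X ∩ Y ∧ g (J.piecewise τ σ) = X ∪ Y := by
    intro σ τ
    constructor
    · rintro ⟨hσ, hτ⟩
      constructor <;> ext v <;> rw [hmem, hσ, hτ] <;>
        by_cases hvX : v ∈ X <;> by_cases hvY : v ∈ Y <;> simp [hvX, hvY]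
    · obtain ⟨σ', τ', rfl, rfl⟩ : ∃ σ' τ', J.piecewise σ' τ' = σ ∧ J.piecewise τ' σ' = τ :=
        ⟨_, _, hinv σ τ, hinv τ σ⟩
      rintro ⟨hσ, hτ⟩
      simp only [hinv] at hσ hτ
      constructor <;> ext v <;> rw [hmem, hσ, hτ] <;>
        by_cases hvX : v ∈ X <;> by_cases hvY : v ∈ Y <;> simp [hvX, hvY]
  rw [bernoulliProb, bernoulliProb, bernoulliProb, bernoulliProb, sum_mul_sum, sum_mul_sum,
    ← Fintype.sum_prod_type', ← Fintype.sum_prod_type']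
  refine Fintype.sum_bijective swap hswap.bijective _ _ fun ⟨σ, τ⟩ => ?_
  simp only [swap, Set.indicator_apply, Set.mem_ofPred_eq]
  rw [ite_zero_mul_ite_zero, ite_zero_mul_ite_zero, bernoulliWeight_piecewise_mul_piecewise]
  exact if_congr (hfib σ τ) rfl rfl

end BernoulliProduct

lemma fkg_of_sum_eq_one {α : Type*} [DistribLattice α] [Fintype α] {μ f g h : α → ℝ}
    (hμ₀ : 0 ≤ μ) (hμ₁ : ∑ a, μ a = 1) (hf₀ : 0 ≤ f) (hg₀ : 0 ≤ g) (hf : Monotone f)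
    (hg : Monotone g) (hμ : ∀ a b, μ a * μ b ≤ μ (a ⊓ b) * μ (a ⊔ b))
    (hfg : ∀ a, f a * g a ≤ h a) :
    (∑ a, μ a * f a) * ∑ a, μ a * g a ≤ ∑ a, μ a * h a :=
  calc _ ≤ (∑ a, μ a) * ∑ a, μ a * (f a * g a) := fkg f g μ hμ₀ hf₀ hg₀ hf hg hμ
    _ ≤ _ := by
      rw [hμ₁, one_mul]
      exact sum_le_sum fun a _ => mul_le_mul_of_nonneg_left (hfg a) (hμ₀ a)

lemma eq_of_mk_eq_mk_of_mem {α : Type*} {s : Set α} {u u' : α} (hu : u ∈ s) {v w : ↥sᶜ}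
    (h : s(u, ↑v) = s(u', ↑w)) : v = w := by
  rcases Sym2.eq_iff.mp h with ⟨-, hvw⟩ | ⟨huw, -⟩
  · exact Subtype.ext hvw
  · exact absurd (huw ▸ hu) w.2

section VertexDeletion

variable (G : SimpleGraph V) (S : Finset V)

def liftEdge (e : (G.induce (↑S)ᶜ).edgeFinset) : G.edgeFinset :=
  ⟨e.1.map Subtype.val, G.mem_edgeFinset.mpr <|
    (SimpleGraph.Embedding.induce _).map_mem_edgeSet_iff.mpr (SimpleGraph.mem_edgeFinset.mp e.2)⟩

lemma liftEdge_injective : Function.Injective (liftEdge G S) := fun _ _ h =>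
  Subtype.ext <| Sym2.map.injective Subtype.val_injective (congrArg Subtype.val h)

def restrictOrient (ω : Orient G) : Orient (G.induce (↑S)ᶜ) := fun e => ω (liftEdge G S e)

def outBoundary (ω : Orient G) : Finset ↥(↑S : Set V)ᶜ :=
  univ.filter fun v => ∃ u ∈ S, step G ω u v

variable {G S}

lemma mem_outBoundary {ω : Orient G} {v : ↥(↑S : Set V)ᶜ} :
    v ∈ outBoundary G S ω ↔ ∃ u ∈ S, step G ω u v := by
  simp [outBoundary]

lemma notMem_of_mem_range_liftEdge {e : G.edgeFinset} (he : e ∈ Set.range (liftEdge G S))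
    {v : V} (hv : v ∈ (e : Sym2 V)) : v ∉ S := by
  obtain ⟨e', rfl⟩ := he
  obtain ⟨w, -, rfl⟩ := Sym2.mem_map.mp hv
  exact w.2

lemma step_restrictOrient_iff {ω : Orient G} {x y : ↥(↑S : Set V)ᶜ} :
    step (G.induce (↑S)ᶜ) (restrictOrient G S ω) x y ↔ step G ω x y := Iff.rfl

lemma reaches_of_reaches_restrictOrient {ω : Orient G} {x y : ↥(↑S : Set V)ᶜ}
    (h : reaches (G.induce (↑S)ᶜ) (restrictOrient G S ω) x y) : reaches G ω x y :=
  Relation.ReflTransGen.lift Subtype.val (fun _ _ => step_restrictOrient_iff.mp) _ _ h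

lemma mem_outBoundary_congr {ω ω' : Orient G} {v : ↥(↑S : Set V)ᶜ}
    (h : ∀ e : G.edgeFinset, (∃ u ∈ S, (e : Sym2 V) = s(u, ↑v)) → ω e = ω' e) :
    v ∈ outBoundary G S ω ↔ v ∈ outBoundary G S ω' := by
  simp only [mem_outBoundary, step]
  refine exists_congr fun u => and_congr_right fun hu => exists_congr fun hadj => ?_
  rw [h _ ⟨u, hu, rfl⟩]

lemma exists_reaches_iff_exists_outBoundary {ω : Orient G} {a : V} (ha : a ∉ S) :
    (∃ x ∈ S, reaches G ω x a) ↔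
      ∃ x ∈ outBoundary G S ω, reaches (G.induce (↑S)ᶜ) (restrictOrient G S ω) x ⟨a, ha⟩ := by
  constructor
  · rintro ⟨x, hx, hxa⟩
    -- Follow the path backwards from `a`: the step by which it last enters `G - S` lands in `O_S`.
    have hback : ∀ u, reaches G ω u a →
        (∃ x ∈ outBoundary G S ω, reaches _ (restrictOrient G S ω) x ⟨a, ha⟩) ∨
          ∃ hu : u ∉ S, reaches (G.induce (↑S)ᶜ) (restrictOrient G S ω) ⟨u, hu⟩ ⟨a, ha⟩ := by
      intro u hu
      induction hu using Relation.ReflTransGen.head_induction_on with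
      | refl => exact .inr ⟨ha, .refl⟩
      | @head u c huc _ ih =>
        rcases ih with h | ⟨hc, hca⟩
        · exact .inl h
        · by_cases hu : u ∈ S
          · exact .inl ⟨⟨c, hc⟩, mem_outBoundary.mpr ⟨u, hu, huc⟩, hca⟩
          · exact .inr ⟨hu, .head
              (step_restrictOrient_iff (x := ⟨u, hu⟩) (y := ⟨c, hc⟩) |>.mpr huc) hca⟩
    exact (hback x hxa).resolve_right fun ⟨hxS, _⟩ => hxS hx
  · rintro ⟨x, hx, hxa⟩
    obtain ⟨u, hu, hux⟩ := mem_outBoundary.mp hx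
    exact ⟨u, hu, .head hux (reaches_of_reaches_restrictOrient hxa)⟩

end VertexDeletion

section Probability

variable {G : SimpleGraph V} (p : Sym2 V → ℝ)

lemma Pr_univ : Pr G p Set.univ = 1 := bernoulliProb_univ _

lemma Pr_empty : Pr G p ∅ = 0 := bernoulliProb_empty _

variable {p}

lemma Pr_nonneg (hp : ∀ e ∈ G.edgeSet, 0 ≤ p e ∧ p e ≤ 1) (A : Set (Orient G)) :
    0 ≤ Pr G p A :=
  bernoulliProb_nonneg (fun e : G.edgeFinset => hp e (SimpleGraph.mem_edgeFinset.mp e.2)) A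

lemma Pr_mono (hp : ∀ e ∈ G.edgeSet, 0 ≤ p e ∧ p e ≤ 1) {A B : Set (Orient G)} (h : A ⊆ B) :
    Pr G p A ≤ Pr G p B :=
  bernoulliProb_mono (fun e : G.edgeFinset => hp e (SimpleGraph.mem_edgeFinset.mp e.2)) h

variable {S : Finset V} (p)

lemma Pr_eq_sum_Pr_outBoundary_mul
    (E : Finset ↥(↑S : Set V)ᶜ → Set (Orient (G.induce (↑S)ᶜ))) :
    Pr G p {ω | restrictOrient G S ω ∈ E (outBoundary G S ω)} =
      ∑ X, Pr G p {ω | outBoundary G S ω = X} *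
        Pr (G.induce (↑S)ᶜ) (p ∘ Sym2.map Subtype.val) (E X) :=
  bernoulliProb_setOf_eq_sum_mul (· ∈ Set.range (liftEdge G S))
    (Equiv.ofInjective _ (liftEdge_injective G S)) (outBoundary G S)
    (fun _ _ h => Finset.ext fun _ => mem_outBoundary_congr fun e ⟨_, hu, he⟩ =>
      h e fun hr => notMem_of_mem_range_liftEdge hr (he ▸ Sym2.mem_mk_left _ _) hu) E

lemma sum_Pr_outBoundary : ∑ X, Pr G p {ω | outBoundary G S ω = X} = 1 := by
  simpa [Pr_univ] using (Pr_eq_sum_Pr_outBoundary_mul (S := S) p fun _ => Set.univ).symm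

lemma Pr_outBoundary_mul_Pr_outBoundary (X Y : Finset ↥(↑S : Set V)ᶜ) :
    Pr G p {ω | outBoundary G S ω = X} * Pr G p {ω | outBoundary G S ω = Y} =
      Pr G p {ω | outBoundary G S ω = X ∩ Y} * Pr G p {ω | outBoundary G S ω = X ∪ Y} :=
  bernoulliProb_fiber_mul_fiber
    (fun (e : G.edgeFinset) (v : ↥(↑S : Set V)ᶜ) => ∃ u ∈ S, (e : Sym2 V) = s(u, ↑v))
    (fun _ v w ⟨_, hu, he⟩ ⟨_, _, he'⟩ =>
      eq_of_mk_eq_mk_of_mem (v := v) (w := w) hu (he.symm.trans he'))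
    (outBoundary G S) (fun _ _ _ => mem_outBoundary_congr) X Y

variable {a b : V}

lemma Pr_exists_reaches_eq_sum (ha : a ∉ S) :
    Pr G p {ω | ∃ x ∈ S, reaches G ω x a} =
      ∑ X, Pr G p {ω | outBoundary G S ω = X} *
        Pr (G.induce (↑S)ᶜ) (p ∘ Sym2.map Subtype.val)
          {t | ∃ x ∈ X, reaches _ t x ⟨a, ha⟩} := by
  convert Pr_eq_sum_Pr_outBoundary_mul p fun X => {t | ∃ x ∈ X, reaches _ t x ⟨a, ha⟩} using 2
  ext ω
  exact exists_reaches_iff_exists_outBoundary ha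

lemma Pr_exists_reaches_and_eq_sum (ha : a ∉ S) (hb : b ∉ S) :
    Pr G p {ω | (∃ x ∈ S, reaches G ω x a) ∧ (∃ x ∈ S, reaches G ω x b)} =
      ∑ X, Pr G p {ω | outBoundary G S ω = X} *
        Pr (G.induce (↑S)ᶜ) (p ∘ Sym2.map Subtype.val)
          {t | (∃ x ∈ X, reaches _ t x ⟨a, ha⟩) ∧ (∃ x ∈ X, reaches _ t x ⟨b, hb⟩)} := by
  convert Pr_eq_sum_Pr_outBoundary_mul p fun X =>
    {t | (∃ x ∈ X, reaches _ t x ⟨a, ha⟩) ∧ (∃ x ∈ X, reaches _ t x ⟨b, hb⟩)} using 2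
  ext ω
  exact and_congr (exists_reaches_iff_exists_outBoundary ha)
    (exists_reaches_iff_exists_outBoundary hb)

end Probability

theorem inductive_step_general {V : Type} [Fintype V] [LinearOrder V]
    (G : SimpleGraph V) (p : Sym2 V → ℝ)
    (hp : ∀ e ∈ G.edgeSet, 0 ≤ p e ∧ p e ≤ 1)
    (a b : V)
    (IH : ∀ (W : Type) (_ : Fintype W) (_ : LinearOrder W),
      Fintype.card W < Fintype.card V →
      ∀ (H : SimpleGraph W) (q : Sym2 W → ℝ),
        (∀ e ∈ H.edgeSet, 0 ≤ q e ∧ q e ≤ 1) →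
        ∀ (S' : Finset W), S'.Nonempty → ∀ a' b' : W,
          Pr H q {ω | (∃ x ∈ S', reaches H ω x a') ∧ (∃ x ∈ S', reaches H ω x b')} ≥
            Pr H q {ω | ∃ x ∈ S', reaches H ω x a'} *
              Pr H q {ω | ∃ x ∈ S', reaches H ω x b'}) :
    ∀ (S : Finset V), S.Nonempty →
      Pr G p {ω | (∃ x ∈ S, reaches G ω x a) ∧ (∃ x ∈ S, reaches G ω x b)} ≥
        Pr G p {ω | ∃ x ∈ S, reaches G ω x a} *
          Pr G p {ω | ∃ x ∈ S, reaches G ω x b} := by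
  intro S ⟨s₀, hs₀⟩
  by_cases haS : a ∈ S
  · have hA : ∀ ω, ∃ x ∈ S, reaches G ω x a := fun _ => ⟨a, haS, .refl⟩
    simp only [hA, true_and, Set.ofPred_true, Pr_univ, one_mul, ge_iff_le, le_refl]
  by_cases hbS : b ∈ S
  · have hB : ∀ ω, ∃ x ∈ S, reaches G ω x b := fun _ => ⟨b, hbS, .refl⟩
    simp only [hB, and_true, Set.ofPred_true, Pr_univ, mul_one, ge_iff_le, le_refl]
  have hcard : Fintype.card ↥(↑S : Set V)ᶜ < Fintype.card V :=
    Fintype.card_subtype_lt (x := s₀) (by simpa using hs₀)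
  have hq : ∀ e ∈ (G.induce (↑S : Set V)ᶜ).edgeSet,
      0 ≤ (p ∘ Sym2.map Subtype.val) e ∧ (p ∘ Sym2.map Subtype.val) e ≤ 1 :=
    fun e he => hp _ ((SimpleGraph.Embedding.induce _).map_mem_edgeSet_iff.mpr he)
  rw [ge_iff_le, Pr_exists_reaches_eq_sum p haS, Pr_exists_reaches_eq_sum p hbS,
    Pr_exists_reaches_and_eq_sum p haS hbS]
  refine fkg_of_sum_eq_one (fun _ => Pr_nonneg hp _) (sum_Pr_outBoundary p)
    (fun _ => Pr_nonneg hq _) (fun _ => Pr_nonneg hq _)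
    (fun _ _ hXY => Pr_mono hq fun _ ⟨x, hx, hr⟩ => ⟨x, mem_of_subset hXY hx, hr⟩)
    (fun _ _ hXY => Pr_mono hq fun _ ⟨x, hx, hr⟩ => ⟨x, mem_of_subset hXY hx, hr⟩)
    (fun X Y => (Pr_outBoundary_mul_Pr_outBoundary p X Y).le) fun X => ?_
  rcases X.eq_empty_or_nonempty with rfl | hX
  · simp [Pr_empty]
  · exact IH _ _ _ hcard _ _ hq X hX _ _

/-- The inductive step: if the set-version correlation inequality holds for all
graphs on fewer vertices, then it holds for `G`. -/
theorem inductive_step {V : Type} [Fintype V] [LinearOrder V]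
    (G : SimpleGraph V) (p : Sym2 V → ℝ)
    (hp : ∀ e ∈ G.edgeSet, 0 ≤ p e ∧ p e ≤ 1)
    (s a b : V)
    (IH : ∀ (W : Type) (_ : Fintype W) (_ : LinearOrder W),
      Fintype.card W < Fintype.card V →
      ∀ (H : SimpleGraph W) (q : Sym2 W → ℝ),
        (∀ e ∈ H.edgeSet, 0 ≤ q e ∧ q e ≤ 1) →
        ∀ (S' : Finset W), S'.Nonempty → ∀ a' b' : W,
          Pr H q {ω | (∃ x ∈ S', reaches H ω x a') ∧ (∃ x ∈ S', reaches H ω x b')} ≥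
            Pr H q {ω | ∃ x ∈ S', reaches H ω x a'} *
              Pr H q {ω | ∃ x ∈ S', reaches H ω x b'}) :
    ∀ (S : Finset V), S.Nonempty →
      Pr G p {ω | (∃ x ∈ S, reaches G ω x a) ∧ (∃ x ∈ S, reaches G ω x b)} ≥
        Pr G p {ω | ∃ x ∈ S, reaches G ω x a} *
          Pr G p {ω | ∃ x ∈ S, reaches G ω x b} :=
  inductive_step_general G p hp a b IH
end
end
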